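/- arXiv:2103.09176 — 2 statements merged into one kernel-verified Lean document; each statement's English description precedes it below -/
import Mathlib

section
/- Let A and B be unital C*-algebras and let Θ = (Θ_t)_{t ∈ [1,∞)} : A → B be a continuous family of maps which is self-adjoint (Θ_t(a*) = Θ_t(a)* for all a, t), unital (Θ_t(1) = 1), asymptotically linear, and asymptotically contractive. Then Θ is asymptotically positive: for every positive a ∈ A, the negative part Θ_t(a)⁻ of the self-adjoint element Θ_t(a) converges to 0 in norm as t → ∞. -/
open Filter Topology Set

/-!
Put `x = ‖a‖ - a`, so that `0 ≤ x ≤ ‖a‖` and `‖x‖ ≤ ‖a‖`. Asymptotic linearity and unitality give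
`Θ_t x ≈ ‖a‖ - Θ_t a`, and asymptotic contractivity gives `‖Θ_t x‖ ≤ ‖a‖ + ε` eventually. Hence
`‖a‖ - Θ_t a ≤ ‖a‖ + 2ε`, i.e. `Θ_t a ≥ -2ε`, which bounds the spectrum of `Θ_t a` below by `-2ε`
and so `‖(Θ_t a)⁻‖ ≤ 2ε`. Contractivity is only informative for families bounded at `x`; that
boundedness follows from equicontinuity, since `A` is connected and `Θ_t 1 = 1` is bounded.
-/

lemma BddAbove.range_norm_of_dist_le {ι E : Type*} [SeminormedAddCommGroup E] {f g : ι → E}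
    {c : ℝ} (hf : BddAbove (range fun i ↦ ‖f i‖)) (hfg : ∀ i, dist (g i) (f i) ≤ c) :
    BddAbove (range fun i ↦ ‖g i‖) := by
  obtain ⟨M, hM⟩ := hf
  refine ⟨M + c, forall_mem_range.2 fun i ↦ ?_⟩
  linarith [norm_le_norm_add_const_of_dist_le (hfg i), hM (mem_range_self i)]

lemma Equicontinuous.bddAbove_range_norm {ι X E : Type*} [TopologicalSpace X]
    [PreconnectedSpace X] [SeminormedAddCommGroup E] {F : ι → X → E} (hF : Equicontinuous F)
    {x₀ : X} (h₀ : BddAbove (range fun i ↦ ‖F i x₀‖)) (x : X) :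
    BddAbove (range fun i ↦ ‖F i x‖) := by
  have hloc : IsLocallyConstant fun x ↦ BddAbove (range fun i ↦ ‖F i x‖) := by
    refine (IsLocallyConstant.iff_eventually_eq _).2 fun x ↦ ?_
    filter_upwards [Metric.equicontinuousAt_iff_right.1 (hF x) 1 one_pos] with y hy
    exact propext ⟨fun h ↦ h.range_norm_of_dist_le fun i ↦ (hy i).le,
      fun h ↦ h.range_norm_of_dist_le fun i ↦ (dist_comm (F i x) _ ▸ hy i).le⟩
  exact hloc.apply_eq_of_preconnectedSpace x₀ x ▸ h₀

section CStarAlgebra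

variable {A : Type*} [CStarAlgebra A] [PartialOrder A] [StarOrderedRing A]

lemma IsSelfAdjoint.norm_negPart_le_of_neg_algebraMap_le {b : A} (hb : IsSelfAdjoint b)
    {c : ℝ} (hc : 0 ≤ c) (h : -algebraMap ℝ A c ≤ b) : ‖b⁻‖ ≤ c := by
  rw [← map_neg, algebraMap_le_iff_le_spectrum] at h
  rw [CFC.negPart_def, cfcₙ_eq_cfc]
  refine norm_cfc_le hc fun x hx ↦ ?_
  rw [Real.norm_of_nonneg (negPart_nonneg x), negPart_def]
  exact max_le (by linarith [h x hx]) hc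

lemma IsSelfAdjoint.norm_negPart_le_of_norm_algebraMap_sub_le {b : A} (hb : IsSelfAdjoint b)
    {r c : ℝ} (hc : 0 ≤ c) (h : ‖algebraMap ℝ A r - b‖ ≤ r + c) : ‖b⁻‖ ≤ c := by
  refine hb.norm_negPart_le_of_neg_algebraMap_le hc ?_
  have hle : algebraMap ℝ A r - b ≤ algebraMap ℝ A (r + c) :=
    ((IsSelfAdjoint.algebraMap A (.all r)).sub hb).le_algebraMap_norm_self.trans
      (algebraMap_mono A h)
  rw [map_add, ← sub_nonneg] at hle
  rw [← sub_nonneg]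
  convert hle using 1
  abel

lemma norm_algebraMap_norm_sub_le {a : A} (ha : 0 ≤ a) : ‖algebraMap ℝ A ‖a‖ - a‖ ≤ ‖a‖ := by
  rw [CStarAlgebra.norm_le_iff_le_algebraMap _ (norm_nonneg a)
    (sub_nonneg.2 (IsSelfAdjoint.of_nonneg ha).le_algebraMap_norm_self)]
  exact sub_le_self _ ha

end CStarAlgebra

theorem stmt_9_general {A B : Type*} [CStarAlgebra A] [PartialOrder A] [StarOrderedRing A]
    [CStarAlgebra B] [PartialOrder B] [StarOrderedRing B]
    (Θ : ℝ → A → B)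
    (hequi : Equicontinuous Θ)
    (hsa : ∀ t a, Θ t (star a) = star (Θ t a))
    (hunital : ∀ t, Θ t 1 = 1)
    (hlin : ∀ (c₁ c₂ : ℂ) (a₁ a₂ : A),
      Tendsto (fun t => ‖Θ t (c₁ • a₁ + c₂ • a₂) - c₁ • Θ t a₁ - c₂ • Θ t a₂‖)
        atTop (nhds 0))
    (hcontr : ∀ a, Filter.limsup (fun t => ‖Θ t a‖) atTop ≤ ‖a‖) :
    ∀ a : A, 0 ≤ a → Tendsto (fun t => (Θ t a)⁻) atTop (nhds 0) := by
  intro a ha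
  set x := algebraMap ℝ A ‖a‖ - a
  have hdefect : Tendsto (fun t ↦ ‖Θ t x - (algebraMap ℝ B ‖a‖ - Θ t a)‖) atTop (𝓝 0) := by
    convert hlin (‖a‖ : ℂ) (-1) 1 a using 3 with t
    simp only [hunital, Complex.coe_smul, Algebra.algebraMap_eq_smul_one, x]
    rw [neg_one_smul, neg_one_smul, ← sub_eq_add_neg, sub_neg_eq_add, sub_add]
  have hbdd : BddAbove (range fun t ↦ ‖Θ t x‖) :=
    hequi.bddAbove_range_norm (x₀ := 1) (by simp [hunital]) x
  refine NormedAddGroup.tendsto_nhds_zero.2 fun ε hε ↦ ?_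
  have hδ : 0 < ε / 4 := by positivity
  filter_upwards [eventually_lt_add_pos_of_limsup_le hbdd.isBoundedUnder_of_range (hcontr x) hδ,
    hdefect.eventually_lt_const hδ] with t hxt hdt
  have hself : IsSelfAdjoint (Θ t a) := by
    rw [isSelfAdjoint_iff, ← hsa, (IsSelfAdjoint.of_nonneg ha).star_eq]
  refine (hself.norm_negPart_le_of_norm_algebraMap_sub_le (r := ‖a‖) (half_pos hε).le ?_).trans_lt
    (half_lt_self hε)
  calc ‖algebraMap ℝ B ‖a‖ - Θ t a‖
      ≤ ‖Θ t x‖ + ‖Θ t x - (algebraMap ℝ B ‖a‖ - Θ t a)‖ := norm_le_insert _ _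
    _ ≤ ‖a‖ + ε / 2 := by linarith [norm_algebraMap_norm_sub_le ha]

theorem stmt_9 {A B : Type*} [CStarAlgebra A] [PartialOrder A] [StarOrderedRing A]
    [CStarAlgebra B] [PartialOrder B] [StarOrderedRing B]
    (Θ : ℝ → A → B)
    (hcont : ∀ a, Continuous fun t => Θ t a)
    (hequi : Equicontinuous Θ)
    (hsa : ∀ t a, Θ t (star a) = star (Θ t a))
    (hunital : ∀ t, Θ t 1 = 1)
    (hlin : ∀ (c₁ c₂ : ℂ) (a₁ a₂ : A),
      Tendsto (fun t => ‖Θ t (c₁ • a₁ + c₂ • a₂) - c₁ • Θ t a₁ - c₂ • Θ t a₂‖)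
        atTop (nhds 0))
    (hcontr : ∀ a, Filter.limsup (fun t => ‖Θ t a‖) atTop ≤ ‖a‖) :
    ∀ a : A, 0 ≤ a → Tendsto (fun t => (Θ t a)⁻) atTop (nhds 0) :=
  stmt_9_general Θ hequi hsa hunital hlin hcontr
end

section
/- Let A and B be unital C*-algebras and Θ = (Θ_t)_{t ∈ [1,∞)} : A → B a continuous family of maps such that each Θ_t and each Θ_t ⊗ id_{M_n} (entrywise application) is self-adjoint, unital, and such that Θ ⊗ id_{M_n} is asymptotically linear and asymptotically contractive for every n ≥ 1. Then Θ is asymptotically completely positive: for each n and each positive a ∈ M_n(A), the negative part (Θ_t ⊗ id_{M_n})(a)⁻ converges to 0 in norm as t → ∞. -/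
/-!
For `0 ≤ a` and `c = ‖a‖ / 2` one has `‖a - c‖ ≤ c`. Unitality and asymptotic linearity make
`Θₜ(a) - c` asymptotically equal to `Θₜ(a - c)`, whose norm is eventually below `c + ε` by
asymptotic contractivity; and `‖x - c‖ ≤ c + ε` puts the spectrum of `x` above `-ε`, so `‖x⁻‖ ≤ ε`.

The `limsup` of an unbounded real family is a junk value, so the norms `‖Θₜ(a)‖` must be shown
bounded separately: equicontinuity on the connected space `A` propagates boundedness from
`Θₜ(1) = 1` to every point, and entrywise bounds pass to `M_n(B)` through the isometric copy
`CStarMatrix` of the matrix algebra.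
-/

open Filter Topology Bornology Set

theorem Equicontinuous.isBounded_range_apply {ι X E : Type*} [TopologicalSpace X]
    [PreconnectedSpace X] [PseudoMetricSpace E] {F : ι → X → E} (hF : Equicontinuous F)
    {x₀ : X} (h₀ : IsBounded (range fun i => F i x₀)) (x : X) :
    IsBounded (range fun i => F i x) := by
  have transfer : ∀ {f g : ι → E}, (∀ i, dist (f i) (g i) < 1) →
      IsBounded (range f) → IsBounded (range g) := by
    intro f g hfg hf
    obtain ⟨C, hC⟩ := Metric.isBounded_range_iff.mp hf
    refine Metric.isBounded_range_iff.mpr ⟨1 + C + 1, fun i j => ?_⟩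
    calc dist (g i) (g j) ≤ dist (g i) (f i) + dist (f i) (f j) + dist (f j) (g j) :=
          dist_triangle4 _ _ _ _
      _ ≤ 1 + C + 1 := by
        gcongr
        exacts [(dist_comm (g i) (f i) ▸ hfg i).le, hC i j, (hfg j).le]
  have hloc : IsLocallyConstant fun y => IsBounded (range fun i => F i y) := by
    refine (IsLocallyConstant.iff_eventually_eq _).mpr fun p => ?_
    filter_upwards [Metric.equicontinuousAt_iff_right.mp (hF p) 1 one_pos] with q hq
    exact propext ⟨transfer fun i => dist_comm (F i p) (F i q) ▸ hq i, transfer hq⟩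
  exact hloc.apply_eq_of_preconnectedSpace x₀ x ▸ h₀

theorem StarAlgEquiv.isBounded_range_of_isBounded_entries {ι n B C : Type*} [Fintype n] [DecidableEq n]
    [CStarAlgebra B] [PartialOrder B] [StarOrderedRing B] [CStarAlgebra C]
    (e : Matrix n n B ≃⋆ₐ[ℂ] C) {M : ι → Matrix n n B}
    (hM : ∀ i j, IsBounded (range fun k => M k i j)) :
    IsBounded (range fun k => e (M k)) := by
  let e' : CStarMatrix n n B ≃⋆ₐ[ℂ] C := CStarMatrix.ofMatrixStarAlgEquiv.symm.trans e
  have hbdd : IsBounded (range fun k => CStarMatrix.ofMatrix (M k)) := by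
    change IsBounded (range fun k (i j : n) => M k i j)
    refine Bornology.forall_isBounded_image_eval_iff.mp fun i =>
      Bornology.forall_isBounded_image_eval_iff.mp fun j => ?_
    rw [image_image, ← range_comp]
    exact hM i j
  have := (StarAlgEquiv.isometry e').lipschitz.isBounded_image hbdd
  rwa [← range_comp] at this

theorem abs_sub_le_norm_sub_algebraMap_of_mem_spectrum {C : Type*} [CStarAlgebra C] {x : C}
    {μ : ℝ} (hμ : μ ∈ spectrum ℝ x) (c : ℝ) : |μ - c| ≤ ‖x - algebraMap ℝ C c‖ := by
  rcases subsingleton_or_nontrivial C with _ | _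
  · simp [spectrum.of_subsingleton] at hμ
  have : μ - c ∈ spectrum ℝ (x - algebraMap ℝ C c) := by
    rw [← spectrum.sub_singleton_eq]
    exact Set.sub_mem_sub hμ rfl
  exact spectrum.norm_le_norm_of_mem this

-- For non-self-adjoint `x`, `x⁻` is the junk value `0`.
theorem norm_negPart_le {C : Type*} [CStarAlgebra C] {x : C}
    {c ε : ℝ} (hε : 0 ≤ ε) (h : ‖x - algebraMap ℝ C c‖ ≤ c + ε) : ‖x⁻‖ ≤ ε := by
  rw [CFC.negPart_def]
  refine norm_cfcₙ_le fun μ hμ => ?_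
  rw [quasispectrum_eq_spectrum_union_zero] at hμ
  rcases hμ with hμ | rfl
  · have := (abs_sub_le_norm_sub_algebraMap_of_mem_spectrum hμ c).trans h
    rw [Real.norm_of_nonneg (negPart_nonneg μ), negPart_def]
    exact max_le (by linarith [neg_abs_le (μ - c)]) hε
  · simpa using hε

theorem norm_sub_algebraMap_half_norm_le {C : Type*} [CStarAlgebra C] [PartialOrder C]
    [StarOrderedRing C] {a : C} (ha : 0 ≤ a) : ‖a - algebraMap ℝ C (‖a‖ / 2)‖ ≤ ‖a‖ / 2 := by
  nontriviality C
  rw [← cfc_id' ℝ _ ((IsSelfAdjoint.of_nonneg ha).sub (.algebraMap C (.all _)))]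
  refine norm_cfc_le (by positivity) fun ν hν => ?_
  rw [← spectrum.sub_singleton_eq] at hν
  obtain ⟨μ, hμ, _, rfl, rfl⟩ := hν
  have h0 : 0 ≤ μ := spectrum_nonneg_of_nonneg ha hμ
  have h1 : ‖μ‖ ≤ ‖a‖ := spectrum.norm_le_norm_of_mem hμ
  rw [Real.norm_of_nonneg h0] at h1
  rw [Real.norm_eq_abs, abs_le]
  constructor <;> linarith

theorem tendsto_negPart_apply_of_nonneg {ι MA MB : Type*} [CStarAlgebra MA] [PartialOrder MA]
    [StarOrderedRing MA] [CStarAlgebra MB] {l : Filter ι} (Φ : ι → MA → MB)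
    (hunital : ∀ i, Φ i 1 = 1)
    (hlin : ∀ (c₁ c₂ : ℂ) (a₁ a₂ : MA),
      Tendsto (fun i => ‖Φ i (c₁ • a₁ + c₂ • a₂) - c₁ • Φ i a₁ - c₂ • Φ i a₂‖) l (𝓝 0))
    (hcontr : ∀ a, limsup (fun i => ‖Φ i a‖) l ≤ ‖a‖)
    (hbdd : ∀ a, IsBoundedUnder (· ≤ ·) l fun i => ‖Φ i a‖)
    {a : MA} (ha : 0 ≤ a) : Tendsto (fun i => (Φ i a)⁻) l (𝓝 0) := by
  set c := ‖a‖ / 2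
  set y := (1 : ℂ) • a + (-c : ℂ) • (1 : MA)
  have hy : y = a - algebraMap ℝ MA c := by
    simp [y, Algebra.algebraMap_eq_smul_one, sub_eq_add_neg, ← Complex.coe_smul]
  have hy_norm : ‖y‖ ≤ c := by
    rw [hy]
    exact norm_sub_algebraMap_half_norm_le ha
  have hΦy : ∀ ε > 0, ∀ᶠ i in l, ‖Φ i y‖ < c + ε := fun ε hε =>
    eventually_lt_of_limsup_lt ((hcontr y).trans_lt (by linarith)) (hbdd y)
  have hlin_y := hlin 1 (-c) a 1
  rw [NormedAddGroup.tendsto_nhds_zero]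
  intro ε hε
  filter_upwards [hΦy (ε / 4) (by positivity),
    hlin_y.eventually (gt_mem_nhds (show 0 < ε / 4 by positivity))] with i hΦyi hlin_yi
  have hclose : ‖Φ i a - algebraMap ℝ MB c‖ ≤ c + ε / 2 := by
    have : Φ i a - algebraMap ℝ MB c
        = Φ i y - (Φ i y - (1 : ℂ) • Φ i a - (-c : ℂ) • Φ i 1) := by
      simp only [Algebra.algebraMap_eq_smul_one, ← Complex.coe_smul, one_smul, hunital, neg_smul,
        sub_neg_eq_add]
      abel
    rw [this]
    linarith [norm_sub_le (Φ i y) (Φ i y - (1 : ℂ) • Φ i a - (-c : ℂ) • Φ i 1)]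
  linarith [norm_negPart_le (by positivity : 0 ≤ ε / 2) hclose]

/-- `MA`, `MB` are `M_n(A)`, `M_n(B)` through `ιA`, `ιB`; `Θₜ ⊗ id_{M_n}` is
`a ↦ ιB ((ιA.symm a).map (Θ t))`. -/
theorem stmt_13_general {A B : Type*} [CStarAlgebra A]
    [CStarAlgebra B] [PartialOrder B] [StarOrderedRing B]
    (n : ℕ) (hn : 1 ≤ n)
    {MA MB : Type*} [CStarAlgebra MA] [PartialOrder MA] [StarOrderedRing MA]
    [CStarAlgebra MB]
    (ιA : Matrix (Fin n) (Fin n) A ≃⋆ₐ[ℂ] MA)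
    (ιB : Matrix (Fin n) (Fin n) B ≃⋆ₐ[ℂ] MB)
    (Θ : ℝ → A → B)
    (hequi : Equicontinuous Θ)
    (hunital : ∀ t : ℝ, ιB ((ιA.symm 1).map (Θ t)) = 1)
    (hlin : ∀ (c₁ c₂ : ℂ) (a₁ a₂ : MA),
      Tendsto
        (fun t => ‖ιB ((ιA.symm (c₁ • a₁ + c₂ • a₂)).map (Θ t)) -
          c₁ • ιB ((ιA.symm a₁).map (Θ t)) - c₂ • ιB ((ιA.symm a₂).map (Θ t))‖)
        atTop (nhds 0))
    (hcontr : ∀ a : MA,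
      Filter.limsup (fun t => ‖ιB ((ιA.symm a).map (Θ t))‖) atTop ≤ ‖a‖) :
    ∀ a : MA, 0 ≤ a →
      Tendsto (fun t => (ιB ((ιA.symm a).map (Θ t)))⁻) atTop (nhds 0) := by
  intro a ha
  have hΘ_one : ∀ t, Θ t 1 = 1 := fun t => by
    simpa using congrArg (fun M => ιB.symm M ⟨0, hn⟩ ⟨0, hn⟩) (hunital t)
  have hΘ_bdd : ∀ x : A, IsBounded (range fun t => Θ t x) :=
    hequi.isBounded_range_apply (x₀ := 1) (by simp [hΘ_one])
  refine tendsto_negPart_apply_of_nonneg (fun t x => ιB ((ιA.symm x).map (Θ t)))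
    hunital hlin hcontr (fun x => ?_) ha
  obtain ⟨C, hC⟩ := isBounded_iff_forall_norm_le.mp
    (ιB.isBounded_range_of_isBounded_entries fun i j => hΘ_bdd (ιA.symm x i j))
  exact isBoundedUnder_of ⟨C, fun t => hC _ ⟨t, rfl⟩⟩

/-- `MA` and `MB` are the C*-algebras `M_n(A)` and `M_n(B)`: they are C*-algebras
equipped with `*`-algebra isomorphisms `ιA`, `ιB` from the matrix algebras
`Matrix (Fin n) (Fin n) A` and `Matrix (Fin n) (Fin n) B`.  The amplification
`Θ_t ⊗ id_{M_n}` is the entrywise application `a ↦ ιB ((ιA.symm a).map (Θ t))`. -/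
theorem stmt_13 {A B : Type*} [CStarAlgebra A] [PartialOrder A] [StarOrderedRing A]
    [CStarAlgebra B] [PartialOrder B] [StarOrderedRing B]
    (n : ℕ) (hn : 1 ≤ n)
    {MA MB : Type*} [CStarAlgebra MA] [PartialOrder MA] [StarOrderedRing MA]
    [CStarAlgebra MB] [PartialOrder MB] [StarOrderedRing MB]
    (ιA : Matrix (Fin n) (Fin n) A ≃⋆ₐ[ℂ] MA)
    (ιB : Matrix (Fin n) (Fin n) B ≃⋆ₐ[ℂ] MB)
    (Θ : ℝ → A → B)
    (hcont : ∀ a, Continuous fun t => Θ t a)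
    (hequi : Equicontinuous Θ)
    (hsa : ∀ (t : ℝ) (a : MA),
      ιB ((ιA.symm (star a)).map (Θ t)) = star (ιB ((ιA.symm a).map (Θ t))))
    (hunital : ∀ t : ℝ, ιB ((ιA.symm 1).map (Θ t)) = 1)
    (hlin : ∀ (c₁ c₂ : ℂ) (a₁ a₂ : MA),
      Tendsto
        (fun t => ‖ιB ((ιA.symm (c₁ • a₁ + c₂ • a₂)).map (Θ t)) -
          c₁ • ιB ((ιA.symm a₁).map (Θ t)) - c₂ • ιB ((ιA.symm a₂).map (Θ t))‖)
        atTop (nhds 0))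
    (hcontr : ∀ a : MA,
      Filter.limsup (fun t => ‖ιB ((ιA.symm a).map (Θ t))‖) atTop ≤ ‖a‖) :
    ∀ a : MA, 0 ≤ a →
      Tendsto (fun t => (ιB ((ιA.symm a).map (Θ t)))⁻) atTop (nhds 0) :=
  stmt_13_general n hn ιA ιB Θ hequi hunital hlin hcontr
end
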